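/- The key separation identity: for distinct λ_1, ..., λ_g and any n with 1 ≤ n ≤ g, and for any j ≠ k, one has ∂/∂λ_j [β_n'(λ_k)/β'(λ_k)] = (1/(β'(λ_k)(λ_j - λ_k))) · ∂(β_n(λ_k))/∂λ_j, where β(λ) = ∏_{l=1}^g (λ - λ_l), β_n(λ) is its degree-n truncation, primes denote λ-derivatives, and evaluation is at the roots. -/

import Mathlib

/-- `β(λ) = ∏_{l} (λ - λ_l)` with the roots `λ_l` indeterminates. -/
noncomputable def betaP (F : Type*) [Field F] (g : ℕ) :
    Polynomial (MvPolynomial (Fin g) F) :=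
  ∏ l : Fin g, (Polynomial.X - Polynomial.C (MvPolynomial.X l))

/-- The truncation `β_n(λ) = λ^n + β_1 λ^{n-1} + ⋯ + β_n`. -/
noncomputable def betaTrunc (F : Type*) [Field F] (g n : ℕ) :
    Polynomial (MvPolynomial (Fin g) F) :=
  ∑ m ∈ Finset.range (n + 1),
    Polynomial.C ((betaP F g).coeff (g - m)) * Polynomial.X ^ (n - m)

/-- The canonical map into the field of rational functions of the roots. -/
noncomputable def toFrac (F : Type*) [Field F] (g : ℕ) :
    MvPolynomial (Fin g) F →+* FractionRing (MvPolynomial (Fin g) F) :=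
  algebraMap (MvPolynomial (Fin g) F) (FractionRing (MvPolynomial (Fin g) F))

/-!
Write `a = λ_j`, `b = λ_k` and `β = (λ - a) Q` with `Q = ∏_{l ≠ j} (λ - λ_l)`. The
truncation `β_n` is `β` with its `g - n` lowest coefficients dropped, i.e. `divX^[g - n] β`,
so `β_n = (λ - a) S + c` with `S = divX^[g - n] Q`. Neither `Q`, `S` nor `c` involves `a`,
and `∂/∂λ_j` commutes with evaluation at `b` when applied coefficientwise, which gives
`∂_j β_n(b) = -S(b)`, `∂_j β_n'(b) = -S'(b)` and `∂_j β'(b) = -Q'(b)`. Since `Q(b) = 0`,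
`β'(b) = (b - a) Q'(b)` and `β_n'(b) = S(b) + (b - a) S'(b)`; substituting into the quotient
rule, both sides equal `S(b) / ((b - a)² Q'(b))`.
-/

open Polynomial

namespace Derivation

variable {R A : Type*} [CommRing R] [CommRing A] [Algebra R A] (d : Derivation R A A)

/-- `Derivation.mapCoeffs`, with values in `A[X]` rather than in `PolynomialModule A A`. -/
noncomputable def coeffwise : Derivation R A[X] A[X] :=
  PolynomialModule.equivPolynomialSelf.compDer d.mapCoeffs

@[simp]
lemma coeff_coeffwise (p : A[X]) (i : ℕ) : (d.coeffwise p).coeff i = d (p.coeff i) := rfl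

@[simp]
lemma coeffwise_C (x : A) : d.coeffwise (C x) = C (d x) := by
  ext i
  rcases i with _ | i <;> simp [coeff_C]

@[simp]
lemma coeffwise_X : d.coeffwise (X : A[X]) = 0 := by
  ext i
  simp [coeff_X, apply_ite d]

lemma coeffwise_monomial (n : ℕ) (x : A) : d.coeffwise (monomial n x) = monomial n (d x) := by
  ext i
  simp [coeff_monomial, apply_ite d]

lemma coeffwise_divX (p : A[X]) : d.coeffwise (divX p) = divX (d.coeffwise p) := by
  ext i
  simp [coeff_divX]

lemma coeffwise_divX_iterate (p : A[X]) (n : ℕ) :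
    d.coeffwise (divX^[n] p) = divX^[n] (d.coeffwise p) :=
  Function.Commute.iterate_right (f := d.coeffwise) (coeffwise_divX d) n p

lemma coeffwise_derivative (p : A[X]) :
    d.coeffwise (derivative p) = derivative (d.coeffwise p) := by
  ext i
  simp [coeff_derivative, mul_comm]

lemma apply_eval_of_apply_eq_zero {x : A} (hx : d x = 0) (p : A[X]) :
    d (p.eval x) = (d.coeffwise p).eval x := by
  induction p using Polynomial.induction_on' with
  | add p q hp hq => simp only [eval_add, map_add, hp, hq]
  | monomial n a => simp [coeffwise_monomial, leibniz_pow, hx, mul_comm]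

end Derivation

namespace Polynomial

lemma coeff_divX_iterate {R : Type*} [Semiring R] (p : R[X]) (d i : ℕ) :
    (divX^[d] p).coeff i = p.coeff (i + d) := by
  induction d generalizing i with
  | zero => rfl
  | succ d ih => rw [Function.iterate_succ_apply', coeff_divX, ih, add_right_comm, add_assoc]

lemma natDegree_divX_iterate_le {R : Type*} [Semiring R] (p : R[X]) (d : ℕ) :
    (divX^[d] p).natDegree ≤ p.natDegree - d :=
  natDegree_le_iff_coeff_eq_zero.mpr fun i hi => by
    rw [coeff_divX_iterate]
    exact coeff_eq_zero_of_natDegree_lt (by omega)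

variable {R : Type*} [CommRing R]

lemma divX_X_sub_C_mul (a : R) (p : R[X]) :
    divX ((X - C a) * p) = (X - C a) * divX p + C (p.coeff 0) := by
  ext i
  rcases i with _ | i
  · simp [coeff_divX, coeff_X_sub_C_mul, mul_coeff_zero]
    ring
  · simp [coeff_divX, coeff_X_sub_C_mul]

lemma exists_divX_iterate_X_sub_C_mul (a : R) (q : R[X]) (d : ℕ) :
    ∃ c, divX^[d] ((X - C a) * q) = (X - C a) * divX^[d] q + C c := by
  induction d with
  | zero => exact ⟨0, by simp⟩
  | succ d ih =>
    obtain ⟨c, hc⟩ := ih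
    refine ⟨(divX^[d] q).coeff 0, ?_⟩
    rw [Function.iterate_succ_apply', Function.iterate_succ_apply', hc, divX_add, divX_C,
      add_zero, divX_X_sub_C_mul]

lemma eval_derivative_X_sub_C_mul (a b : R) (p : R[X]) :
    (derivative ((X - C a) * p)).eval b = p.eval b + (b - a) * (derivative p).eval b := by
  simp

end Polynomial

lemma MvPolynomial.pderiv_eval_X_of_ne {σ R : Type*} [CommRing R] {i j : σ} (hij : i ≠ j)
    (p : (MvPolynomial σ R)[X]) :
    pderiv i (p.eval (X j)) = ((pderiv i).coeffwise p).eval (X j) :=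
  Derivation.apply_eval_of_apply_eq_zero _ (pderiv_X_of_ne hij.symm) p

/-- `β(λ) / (λ - λ_j)`. -/
noncomputable def betaErase (F : Type*) [Field F] (g : ℕ) (j : Fin g) :
    Polynomial (MvPolynomial (Fin g) F) :=
  ∏ l ∈ Finset.univ.erase j, (X - C (MvPolynomial.X l))

section Beta

variable {F : Type*} [Field F] {g n : ℕ}

lemma betaP_eq_X_sub_C_mul_betaErase (j : Fin g) :
    betaP F g = (X - C (MvPolynomial.X j)) * betaErase F g j :=
  (Finset.mul_prod_erase _ _ (Finset.mem_univ j)).symm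

lemma natDegree_betaP : (betaP F g).natDegree = g := by
  simp [betaP]

lemma betaTrunc_eq_divX_iterate (hng : n ≤ g) :
    betaTrunc F g n = divX^[g - n] (betaP F g) := by
  have hdeg : (divX^[g - n] (betaP F g)).natDegree < n + 1 := by
    have := natDegree_divX_iterate_le (betaP F g) (g - n)
    rw [natDegree_betaP] at this
    omega
  rw [as_sum_range' _ _ hdeg, betaTrunc, ← Finset.sum_range_reflect]
  refine Finset.sum_congr rfl fun i hi => ?_
  have hi : i ≤ n := Nat.lt_succ_iff.mp (Finset.mem_range.mp hi)
  rw [coeff_divX_iterate, C_mul_X_pow_eq_monomial, show n + 1 - 1 - i = n - i by omega,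
    show n - (n - i) = i by omega, show g - (n - i) = i + (g - n) by omega]

lemma eval_betaErase_of_ne {j k : Fin g} (hjk : j ≠ k) :
    (betaErase F g j).eval (MvPolynomial.X k) = 0 := by
  rw [betaErase, eval_prod]
  exact Finset.prod_eq_zero (Finset.mem_erase.mpr ⟨hjk.symm, Finset.mem_univ k⟩) (by simp)

lemma eval_derivative_betaP_ne_zero (k : Fin g) :
    (derivative (betaP F g)).eval (MvPolynomial.X k) ≠ 0 := by
  rw [betaP_eq_X_sub_C_mul_betaErase k, eval_derivative_X_sub_C_mul, sub_self, zero_mul,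
    add_zero, betaErase, eval_prod, Finset.prod_ne_zero_iff]
  intro l hl
  simpa [sub_eq_zero] using
    fun h => (Finset.mem_erase.mp hl).1 (MvPolynomial.X_injective (R := F) h).symm

lemma coeffwise_pderiv_betaErase (j : Fin g) :
    (MvPolynomial.pderiv j).coeffwise (betaErase F g j) = 0 := by
  refine Finset.prod_induction _ (fun p => (MvPolynomial.pderiv j).coeffwise p = 0)
    (fun p q hp hq => by simp [hp, hq]) (Derivation.map_one_eq_zero _) fun l hl => ?_
  simp [MvPolynomial.pderiv_X_of_ne (Finset.mem_erase.mp hl).1]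

lemma coeffwise_pderiv_betaP (j : Fin g) :
    (MvPolynomial.pderiv j).coeffwise (betaP F g) = -betaErase F g j := by
  simp [betaP_eq_X_sub_C_mul_betaErase j, coeffwise_pderiv_betaErase]

lemma coeffwise_pderiv_betaTrunc (hng : n ≤ g) (j : Fin g) :
    (MvPolynomial.pderiv j).coeffwise (betaTrunc F g n) = -divX^[g - n] (betaErase F g j) := by
  rw [betaTrunc_eq_divX_iterate hng, Derivation.coeffwise_divX_iterate, coeffwise_pderiv_betaP]
  ext i
  simp [coeff_divX_iterate]

lemma exists_betaTrunc_eq_X_sub_C_mul_add_C (hng : n ≤ g) (j : Fin g) :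
    ∃ c, betaTrunc F g n =
      (X - C (MvPolynomial.X j)) * divX^[g - n] (betaErase F g j) + C c := by
  rw [betaTrunc_eq_divX_iterate hng, betaP_eq_X_sub_C_mul_betaErase j]
  exact exists_divX_iterate_X_sub_C_mul _ _ _

lemma eval_derivative_betaTrunc (hng : n ≤ g) (j : Fin g) (b : MvPolynomial (Fin g) F) :
    (derivative (betaTrunc F g n)).eval b = (divX^[g - n] (betaErase F g j)).eval b +
      (b - MvPolynomial.X j) * (derivative (divX^[g - n] (betaErase F g j))).eval b := by
  obtain ⟨c, hc⟩ := exists_betaTrunc_eq_X_sub_C_mul_add_C (F := F) hng j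
  rw [hc, derivative_add, derivative_C, add_zero, eval_derivative_X_sub_C_mul]

lemma eval_derivative_betaP_of_ne {j k : Fin g} (hjk : j ≠ k) :
    (derivative (betaP F g)).eval (MvPolynomial.X k) =
      (MvPolynomial.X k - MvPolynomial.X j) *
        (derivative (betaErase F g j)).eval (MvPolynomial.X k) := by
  rw [betaP_eq_X_sub_C_mul_betaErase j, eval_derivative_X_sub_C_mul, eval_betaErase_of_ne hjk,
    zero_add]

end Beta

theorem separation_identity_offdiag_general (F : Type*) [Field F] (g n : ℕ)
    (hng : n ≤ g) (j k : Fin g) (hjk : j ≠ k) :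
    (toFrac F g (MvPolynomial.pderiv j
          ((Polynomial.derivative (betaTrunc F g n)).eval (MvPolynomial.X k))) *
        toFrac F g ((Polynomial.derivative (betaP F g)).eval (MvPolynomial.X k)) -
      toFrac F g ((Polynomial.derivative (betaTrunc F g n)).eval (MvPolynomial.X k)) *
        toFrac F g (MvPolynomial.pderiv j
          ((Polynomial.derivative (betaP F g)).eval (MvPolynomial.X k)))) /
      (toFrac F g ((Polynomial.derivative (betaP F g)).eval (MvPolynomial.X k))) ^ 2 =
    (toFrac F g ((Polynomial.derivative (betaP F g)).eval (MvPolynomial.X k)) *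
        (toFrac F g (MvPolynomial.X j) - toFrac F g (MvPolynomial.X k)))⁻¹ *
      toFrac F g
        (MvPolynomial.pderiv j ((betaTrunc F g n).eval (MvPolynomial.X k))) := by
  have hβ' : toFrac F g ((derivative (betaP F g)).eval (MvPolynomial.X k)) ≠ 0 :=
    (map_ne_zero_iff _ (IsFractionRing.injective _ _)).mpr (eval_derivative_betaP_ne_zero k)
  simp only [MvPolynomial.pderiv_eval_X_of_ne hjk, Derivation.coeffwise_derivative,
    coeffwise_pderiv_betaTrunc hng, coeffwise_pderiv_betaP]
  rw [eval_derivative_betaTrunc hng j]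
  rw [eval_derivative_betaP_of_ne hjk] at hβ' ⊢
  simp only [eval_neg, map_mul, map_sub, map_add, map_neg] at hβ' ⊢
  have hu := left_ne_zero_of_mul hβ'
  have hq := right_ne_zero_of_mul hβ'
  rw [← neg_sub (toFrac F g (MvPolynomial.X k))]
  field_simp
  ring

/-- the key separation identity: for `1 ≤ n ≤ g` and `j ≠ k`,
`∂/∂λ_j [β_n'(λ_k)/β'(λ_k)] = (1/(β'(λ_k)(λ_j - λ_k))) ∂(β_n(λ_k))/∂λ_j`,
the left-hand side written via the quotient rule in the field of rational functions. -/
theorem separation_identity_offdiag (F : Type*) [Field F] [CharZero F] (g n : ℕ)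
    (hn1 : 1 ≤ n) (hng : n ≤ g) (j k : Fin g) (hjk : j ≠ k) :
    (toFrac F g (MvPolynomial.pderiv j
          ((Polynomial.derivative (betaTrunc F g n)).eval (MvPolynomial.X k))) *
        toFrac F g ((Polynomial.derivative (betaP F g)).eval (MvPolynomial.X k)) -
      toFrac F g ((Polynomial.derivative (betaTrunc F g n)).eval (MvPolynomial.X k)) *
        toFrac F g (MvPolynomial.pderiv j
          ((Polynomial.derivative (betaP F g)).eval (MvPolynomial.X k)))) /
      (toFrac F g ((Polynomial.derivative (betaP F g)).eval (MvPolynomial.X k))) ^ 2 =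
    (toFrac F g ((Polynomial.derivative (betaP F g)).eval (MvPolynomial.X k)) *
        (toFrac F g (MvPolynomial.X j) - toFrac F g (MvPolynomial.X k)))⁻¹ *
      toFrac F g
        (MvPolynomial.pderiv j ((betaTrunc F g n).eval (MvPolynomial.X k))) :=
  separation_identity_offdiag_general F g n hng j k hjk
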